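/- For every integer b and nonnegative integers a with a > b ≥ 0: b + {a - b | 0} = {a | b}, i.e. the sum of the integer game b and the switch {a-b | 0} is equivalent to the switch {a | b}. -/

import Mathlib

namespace SetTheory

/-- Pre-games, as in the Mathlib of December 2024 (removed from Mathlib since). -/
inductive PGame : Type (u + 1)
  | mk : ∀ α β : Type u, (α → PGame) → (β → PGame) → PGame

namespace PGame

/-- The pre-game `0 = { | }`. -/
instance : Zero PGame.{u} :=
  ⟨⟨PEmpty, PEmpty, PEmpty.elim, PEmpty.elim⟩⟩

/-- Negation of a pre-game: swap Left and Right recursively. -/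
def neg : PGame.{u} → PGame.{u}
  | ⟨l, r, L, R⟩ => ⟨r, l, fun i => neg (R i), fun i => neg (L i)⟩

instance : Neg PGame.{u} :=
  ⟨neg⟩

/-- Disjunctive sum of pre-games. -/
noncomputable def add (x : PGame.{u}) : PGame.{u} → PGame.{u} :=
  PGame.rec (motive := fun _ => PGame.{u} → PGame.{u})
    (fun xl xr _ _ IHxl IHxr y =>
      PGame.rec (motive := fun _ => PGame.{u})
        (fun yl yr yL yR IHyl IHyr =>
          ⟨xl ⊕ yl, xr ⊕ yr, Sum.rec (fun i => IHxl i (mk yl yr yL yR)) IHyl,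
            Sum.rec (fun i => IHxr i (mk yl yr yL yR)) IHyr⟩) y) x

noncomputable instance : Add PGame.{u} :=
  ⟨add⟩

/-- The pair of relations `(x ≤ y, x ⧏ y)`, defined by simultaneous recursion. -/
noncomputable def leLF (x : PGame.{u}) : PGame.{u} → Prop × Prop :=
  PGame.rec (motive := fun _ => PGame.{u} → Prop × Prop)
    (fun _ _ _ _ IHl IHr y =>
      PGame.rec (motive := fun _ => Prop × Prop)
        (fun yl yr yL yR JHl JHr =>
          ((∀ i, (IHl i (mk yl yr yL yR)).2) ∧ ∀ j, (JHr j).2,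
            (∃ i, (JHl i).1) ∨ ∃ j, (IHr j (mk yl yr yL yR)).1)) y) x

instance : LE PGame.{u} :=
  ⟨fun x y => (leLF x y).1⟩

/-- Equivalence of pre-games: `x ≤ y ∧ y ≤ x`. -/
def Equiv (x y : PGame.{u}) : Prop :=
  x ≤ y ∧ y ≤ x

instance : HasEquiv PGame.{u} :=
  ⟨Equiv⟩

/-- The pre-game with Left options `L` and Right options `R`. -/
def ofLists (L R : List PGame.{u}) : PGame.{u} :=
  mk (ULift (Fin L.length)) (ULift (Fin R.length)) (fun i => L[i.down.1]) fun j => R[j.down.1]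

end PGame

end SetTheory


open SetTheory PGame
open scoped PGame

/-- The integer game `n`: `0 = { | }` and `n = {n-1 | }` for `n > 0`. -/
def natGame : ℕ → PGame
  | 0 => 0
  | n + 1 => PGame.ofLists [natGame n] []

/-- The integer game associated to an integer. -/
def intGame (a : ℤ) : PGame :=
  if 0 ≤ a then natGame a.toNat else -natGame (-a).toNat

/-! Write `G = n + {m | 0}` and `H = {n + m | n}` with `n, m` natural. Most options match up
(Left: `n + m ≈ n + m`; Right: `n + 0 ≈ n`). The remaining one is Left's move to
`(n - 1) + {m | 0}` in `G`, which Right answers by moving to `(n - 1) + 0`: this is `≤ H`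
because `n - 1 < n`, so `H`'s Right option `n` cannot refute it. -/

namespace SetTheory.PGame

universe u

def LeftMoves : PGame.{u} → Type u
  | mk l _ _ _ => l

def RightMoves : PGame.{u} → Type u
  | mk _ r _ _ => r

def moveLeft : (x : PGame.{u}) → x.LeftMoves → PGame.{u}
  | mk _ _ L _ => L

def moveRight : (x : PGame.{u}) → x.RightMoves → PGame.{u}
  | mk _ _ _ R => R

def LF (x y : PGame.{u}) : Prop :=
  (leLF x y).2

infix:50 " ⧏ " => LF

theorem le_iff_forall_lf (x y : PGame.{u}) :
    x ≤ y ↔ (∀ i, x.moveLeft i ⧏ y) ∧ ∀ j, x ⧏ y.moveRight j := by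
  cases x; cases y; exact Iff.rfl

theorem lf_iff_exists_le (x y : PGame.{u}) :
    x ⧏ y ↔ (∃ i, x ≤ y.moveLeft i) ∨ ∃ j, x.moveRight j ≤ y := by
  cases x; cases y; exact Iff.rfl

theorem lf_of_le_moveLeft {x y : PGame.{u}} (i : y.LeftMoves) (h : x ≤ y.moveLeft i) : x ⧏ y :=
  (lf_iff_exists_le x y).2 (Or.inl ⟨i, h⟩)

theorem lf_of_moveRight_le {x y : PGame.{u}} (j : x.RightMoves) (h : x.moveRight j ≤ y) : x ⧏ y :=
  (lf_iff_exists_le x y).2 (Or.inr ⟨j, h⟩)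

theorem le_trans_aux (x y z : PGame.{u}) :
    (x ≤ y → y ≤ z → x ≤ z) ∧ (x ≤ y → y ⧏ z → x ⧏ z) ∧ (x ⧏ y → y ≤ z → x ⧏ z) := by
  induction x generalizing y z with | mk xl xr xL xR IHxl IHxr =>
  induction y generalizing z with | mk yl yr yL yR IHyl IHyr =>
  induction z with | mk zl zr zL zR IHzl IHzr =>
  refine ⟨fun hxy hyz => ?_, fun hxy hyz => ?_, fun hxy hyz => ?_⟩
  · obtain ⟨hxyl, -⟩ := (le_iff_forall_lf _ _).1 hxy
    obtain ⟨-, hyzr⟩ := (le_iff_forall_lf _ _).1 hyz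
    exact (le_iff_forall_lf _ _).2
      ⟨fun i => (IHxl i _ _).2.2 (hxyl i) hyz, fun j => (IHzr j).2.1 hxy (hyzr j)⟩
  · rcases (lf_iff_exists_le _ _).1 hyz with ⟨i, h⟩ | ⟨j, h⟩
    · exact lf_of_le_moveLeft i ((IHzl i).1 hxy h)
    · exact (IHyr j _).2.2 (((le_iff_forall_lf _ _).1 hxy).2 j) h
  · rcases (lf_iff_exists_le _ _).1 hxy with ⟨i, h⟩ | ⟨j, h⟩
    · exact (IHyl i _).2.1 h (((le_iff_forall_lf _ _).1 hyz).1 i)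
    · exact lf_of_moveRight_le j ((IHxr j _ _).1 h hyz)

theorem le_trans {x y z : PGame.{u}} (hxy : x ≤ y) (hyz : y ≤ z) : x ≤ z :=
  (le_trans_aux x y z).1 hxy hyz

theorem add_le_iff_forall_lf (x y z : PGame.{u}) :
    x + y ≤ z ↔ (∀ i, x.moveLeft i + y ⧏ z) ∧ (∀ i, x + y.moveLeft i ⧏ z) ∧
      ∀ j, x + y ⧏ z.moveRight j := by
  cases x; cases y
  exact (le_iff_forall_lf _ _).trans ((and_congr_left' Sum.forall).trans and_assoc)

theorem le_add_iff_forall_lf (x y z : PGame.{u}) :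
    z ≤ x + y ↔ (∀ i, z.moveLeft i ⧏ x + y) ∧ (∀ j, z ⧏ x.moveRight j + y) ∧
      ∀ j, z ⧏ x + y.moveRight j := by
  cases x; cases y
  exact (le_iff_forall_lf _ _).trans (and_congr_right' Sum.forall)

theorem lf_add_of_le_moveLeft_add {x y z : PGame.{u}} (i : x.LeftMoves)
    (h : z ≤ x.moveLeft i + y) : z ⧏ x + y := by
  cases x; cases y
  exact lf_of_le_moveLeft (Sum.inl i) h

theorem lf_add_of_le_add_moveLeft {x y z : PGame.{u}} (i : y.LeftMoves)
    (h : z ≤ x + y.moveLeft i) : z ⧏ x + y := by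
  cases x; cases y
  exact lf_of_le_moveLeft (Sum.inr i) h

theorem add_lf_of_moveRight_add_le {x y z : PGame.{u}} (j : x.RightMoves)
    (h : x.moveRight j + y ≤ z) : x + y ⧏ z := by
  cases x; cases y
  exact lf_of_moveRight_le (Sum.inl j) h

theorem add_lf_of_add_moveRight_le {x y z : PGame.{u}} (j : y.RightMoves)
    (h : x + y.moveRight j ≤ z) : x + y ⧏ z := by
  cases x; cases y
  exact lf_of_moveRight_le (Sum.inr j) h

theorem add_zero_equiv (x : PGame.{u}) : x + 0 ≈ x := by
  induction x with | mk xl xr xL xR IHl IHr =>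
  constructor
  · exact (add_le_iff_forall_lf _ _ _).2 ⟨fun i => lf_of_le_moveLeft i (IHl i).1,
      fun i => PEmpty.elim i, fun j => add_lf_of_moveRight_add_le j (IHr j).1⟩
  · exact (le_add_iff_forall_lf _ _ _).2 ⟨fun i => lf_add_of_le_moveLeft_add i (IHl i).2,
      fun j => lf_of_moveRight_le j (IHr j).2, fun j => PEmpty.elim j⟩

theorem moveLeft_ofLists_singleton (a : PGame.{u}) (r : List PGame.{u})
    (i : (ofLists [a] r).LeftMoves) : (ofLists [a] r).moveLeft i = a := by
  obtain ⟨⟨k, hk⟩⟩ := i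
  obtain rfl : k = 0 := by simpa using hk
  rfl

theorem moveRight_ofLists_singleton (l : List PGame.{u}) (b : PGame.{u})
    (j : (ofLists l [b]).RightMoves) : (ofLists l [b]).moveRight j = b := by
  obtain ⟨⟨k, hk⟩⟩ := j
  obtain rfl : k = 0 := by simpa using hk
  rfl

theorem lf_ofLists_of_le {x a : PGame.{u}} (r : List PGame.{u}) (h : x ≤ a) :
    x ⧏ ofLists [a] r :=
  lf_of_le_moveLeft (y := ofLists [a] r) ⟨0, by simp⟩ h

theorem ofLists_lf_of_le {x b : PGame.{u}} (l : List PGame.{u}) (h : b ≤ x) :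
    ofLists l [b] ⧏ x :=
  lf_of_moveRight_le (x := ofLists l [b]) ⟨0, by simp⟩ h

theorem lf_ofLists_add_of_le {x a z : PGame.{u}} (r : List PGame.{u}) (h : z ≤ a + x) :
    z ⧏ ofLists [a] r + x :=
  lf_add_of_le_moveLeft_add (x := ofLists [a] r) ⟨0, by simp⟩ h

theorem lf_add_ofLists_of_le {x a z : PGame.{u}} (r : List PGame.{u}) (h : z ≤ x + a) :
    z ⧏ x + ofLists [a] r :=
  lf_add_of_le_add_moveLeft (y := ofLists [a] r) ⟨0, by simp⟩ h

theorem add_ofLists_lf_of_le {x b z : PGame.{u}} (l : List PGame.{u}) (h : x + b ≤ z) :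
    x + ofLists l [b] ⧏ z :=
  add_lf_of_add_moveRight_le (y := ofLists l [b]) ⟨0, by simp⟩ h

end SetTheory.PGame

theorem moveLeft_natGame_succ (n : ℕ) (i : (natGame (n + 1)).LeftMoves) :
    (natGame (n + 1)).moveLeft i = natGame n :=
  moveLeft_ofLists_singleton _ _ i

instance : IsEmpty (natGame 0).LeftMoves :=
  inferInstanceAs (IsEmpty PEmpty)

instance (n : ℕ) : IsEmpty (natGame n).RightMoves := by
  cases n
  · exact inferInstanceAs (IsEmpty PEmpty)
  · exact inferInstanceAs (IsEmpty (ULift (Fin 0)))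

theorem natGame_le_natGame : ∀ {k l : ℕ}, k ≤ l → natGame k ≤ natGame l
  | 0, _, _ => (le_iff_forall_lf _ _).2 ⟨isEmptyElim, isEmptyElim⟩
  | k + 1, l + 1, h => (le_iff_forall_lf _ _).2 ⟨fun i => by
      rw [moveLeft_natGame_succ]
      exact lf_ofLists_of_le [] (natGame_le_natGame (by omega)), isEmptyElim⟩

theorem natGame_lf_natGame {k l : ℕ} (h : k < l) : natGame k ⧏ natGame l := by
  obtain ⟨l, rfl⟩ : ∃ l', l = l' + 1 := ⟨l - 1, by omega⟩
  exact lf_ofLists_of_le [] (natGame_le_natGame (by omega))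

theorem natGame_add_le (n m : ℕ) : natGame n + natGame m ≤ natGame (n + m) := by
  refine (add_le_iff_forall_lf _ _ _).2 ⟨fun i => ?_, fun i => ?_, isEmptyElim⟩
  · match n, i with
    | n + 1, i =>
      rw [moveLeft_natGame_succ, Nat.add_right_comm]
      exact lf_ofLists_of_le [] (natGame_add_le n m)
  · match m, i with
    | m + 1, i =>
      rw [moveLeft_natGame_succ, ← Nat.add_assoc]
      exact lf_ofLists_of_le [] (natGame_add_le n m)
termination_by n + m

theorem natGame_le_add : ∀ n m : ℕ, natGame (n + m) ≤ natGame n + natGame m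
  | 0, 0 => (le_add_iff_forall_lf _ _ _).2 ⟨fun i => PEmpty.elim i, isEmptyElim, isEmptyElim⟩
  | n + 1, m => by
    rw [Nat.add_right_comm]
    refine (le_add_iff_forall_lf _ _ _).2 ⟨fun i => ?_, isEmptyElim, isEmptyElim⟩
    rw [moveLeft_natGame_succ]
    exact lf_ofLists_add_of_le [] (natGame_le_add n m)
  | 0, m + 1 => by
    rw [Nat.zero_add]
    refine (le_add_iff_forall_lf _ _ _).2 ⟨fun i => ?_, isEmptyElim, isEmptyElim⟩
    rw [moveLeft_natGame_succ]
    exact lf_add_ofLists_of_le [] (by simpa using natGame_le_add 0 m)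

theorem natGame_le_ofLists {k n p : ℕ} (hkp : k ≤ p) (hkn : k < n) :
    natGame k ≤ ofLists [natGame p] [natGame n] := by
  refine (le_iff_forall_lf _ _).2 ⟨fun i => ?_, fun j => ?_⟩
  · obtain _ | k := k
    · exact isEmptyElim i
    rw [moveLeft_natGame_succ]
    exact lf_ofLists_of_le _ (natGame_le_natGame (by omega))
  · rw [moveRight_ofLists_singleton]
    exact natGame_lf_natGame hkn

theorem natGame_add_switch_equiv (n m : ℕ) :
    natGame n + ofLists [natGame m] [0] ≈ ofLists [natGame (n + m)] [natGame n] := by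
  constructor
  · refine (add_le_iff_forall_lf _ _ _).2 ⟨fun i => ?_, fun i => ?_, fun j => ?_⟩
    · obtain _ | n := n
      · exact isEmptyElim i
      rw [moveLeft_natGame_succ]
      exact add_ofLists_lf_of_le _
        (PGame.le_trans (add_zero_equiv _).1 (natGame_le_ofLists (by omega) (by omega)))
    · rw [moveLeft_ofLists_singleton]
      exact lf_ofLists_of_le _ (natGame_add_le n m)
    · rw [moveRight_ofLists_singleton]
      exact add_ofLists_lf_of_le _ (add_zero_equiv _).1
  · refine (le_add_iff_forall_lf _ _ _).2 ⟨fun i => ?_, isEmptyElim, fun j => ?_⟩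
    · rw [moveLeft_ofLists_singleton]
      exact lf_add_ofLists_of_le _ (natGame_le_add n m)
    · rw [moveRight_ofLists_singleton]
      exact ofLists_lf_of_le _ (add_zero_equiv _).2

/-- For integers `a > b ≥ 0`, `b + {a - b | 0}` is equivalent to the switch `{a | b}`. -/
theorem intGame_add_switch_equiv (a b : ℤ) (hab : b < a) (hb : 0 ≤ b) :
    intGame b + PGame.ofLists [intGame (a - b)] [0] ≈
      PGame.ofLists [intGame a] [intGame b] := by
  have hab' : 0 ≤ a - b := by omega
  have ha : 0 ≤ a := by omega
  rw [intGame, intGame, intGame, if_pos hb, if_pos hab', if_pos ha,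
    show a.toNat = b.toNat + (a - b).toNat by omega]
  exact natGame_add_switch_equiv b.toNat (a - b).toNat
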